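/- Let n ≥ 3 be an integer and λ > 0. With f, G as defined below, G is a strictly decreasing C¹ bijection from (0,1) onto (0,∞) with nonvanishing derivative; let G⁻¹ denote its inverse. For u ∈ C¹((0,1)) define u_λ(r) = λ^{−1/2} u(G⁻¹(λ G(r))), which is again C¹ on (0,1). Then the Lebesgue integrals (with values in [0,∞]) satisfy ∫₀¹ ((1−r²)²/4) |u_λ′(r)|² (2/(1−r²))ⁿ r^{n−1} dr = ∫₀¹ ((1−r²)²/4) |u′(r)|² (2/(1−r²))ⁿ r^{n−1} dr. (This is the invariance of the hyperbolic Dirichlet energy ∫_{𝔹ⁿ} |∇_{𝔹ⁿ}u_λ|² dv_{g_{𝔹ⁿ}} = ∫_{𝔹ⁿ} |∇_{𝔹ⁿ}u|² dv_{g_{𝔹ⁿ}} for radial functions, written in polar coordinates up to the constant factor n·ω_{n−1}.) -/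

import Mathlib

open Real Filter Set MeasureTheory

/-- `f n r = (1 - r²)^(n-2) / r^(n-1)`. -/
noncomputable def f (n : ℕ) (r : ℝ) : ℝ := (1 - r ^ 2) ^ (n - 2) / r ^ (n - 1)

/-- `G n r = ∫_r^1 f n t dt`. -/
noncomputable def G (n : ℕ) (r : ℝ) : ℝ := ∫ t in r..(1 : ℝ), f n t

/-!
Since `G' = -f`, the map `φ = G⁻¹ ∘ (λ G)` has `φ' = λ f / (f ∘ φ)`, and the radial energy
density is `u'² · 2^(n-2) / f`. Hence `|(λ^{-1/2} u ∘ φ)'|² / f = φ' · |u' ∘ φ|² / (f ∘ φ)`, and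
the substitution `s = φ r`, a bijection of `(0,1)`, gives the invariance. `G` is a bijection
`(0,1) → (0,∞)` because `f > 0` and `f t ≥ c / t` near `0` makes `G` diverge logarithmically.
-/

theorem contDiffOn_one_of_hasDerivAt {𝕜 F : Type*} [NontriviallyNormedField 𝕜]
    [NormedAddCommGroup F] [NormedSpace 𝕜 F] {φ φ' : 𝕜 → F} {s : Set 𝕜} (hs : IsOpen s)
    (hφ : ∀ x ∈ s, HasDerivAt φ (φ' x) x) (hφ' : ContinuousOn φ' s) :
    ContDiffOn 𝕜 1 φ s := by
  rw [contDiffOn_one_iff_derivWithin hs.uniqueDiffOn]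
  refine ⟨fun x hx => (hφ x hx).differentiableAt.differentiableWithinAt,
    hφ'.congr fun x hx => ?_⟩
  rw [derivWithin_of_isOpen hs hx, (hφ x hx).deriv]

theorem lintegral_sq_deriv_const_mul_comp {s : Set ℝ} (hs : MeasurableSet s)
    {φ φ' u w : ℝ → ℝ} {c : ℝ} (hφ : ∀ x ∈ s, HasDerivAt φ (φ' x) x) (hinj : InjOn φ s)
    (hφ'_nonneg : ∀ x ∈ s, 0 ≤ φ' x) (hu : ∀ x ∈ s, DifferentiableAt ℝ u (φ x))
    (hw : ∀ x ∈ s, c ^ 2 * φ' x * w x = w (φ x)) :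
    ∫⁻ x in s, ENNReal.ofReal (|deriv (fun t => c * u (φ t)) x| ^ 2 * w x) =
      ∫⁻ y in φ '' s, ENNReal.ofReal (|deriv u y| ^ 2 * w y) := by
  rw [lintegral_image_eq_lintegral_abs_deriv_mul hs (fun x hx => (hφ x hx).hasDerivWithinAt)
    hinj]
  refine setLIntegral_congr_fun hs fun x hx => ?_
  have hderiv : HasDerivAt (fun t => c * u (φ t)) (c * (deriv u (φ x) * φ' x)) x :=
    ((hu x hx).hasDerivAt.comp x (hφ x hx)).const_mul c
  rw [hderiv.deriv, abs_of_nonneg (hφ'_nonneg x hx), ← ENNReal.ofReal_mul (hφ'_nonneg x hx),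
    ← hw x hx, sq_abs, sq_abs]
  congr 1
  ring

theorem f_pos {n : ℕ} {r : ℝ} (hr : r ∈ Ioo (0 : ℝ) 1) : 0 < f n r :=
  div_pos (pow_pos (by nlinarith [hr.1, hr.2]) _) (pow_pos hr.1 _)

theorem continuousAt_f {n : ℕ} {r : ℝ} (hr : r ≠ 0) : ContinuousAt (f n) r :=
  ContinuousAt.div (by fun_prop) (by fun_prop) (pow_ne_zero _ hr)

theorem continuousOn_f {n : ℕ} : ContinuousOn (f n) (Ioi 0) :=
  fun _ hx => (continuousAt_f (ne_of_gt hx)).continuousWithinAt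

theorem intervalIntegrable_f {n : ℕ} {a b : ℝ} (ha : 0 < a) (hb : 0 < b) :
    IntervalIntegrable (f n) volume a b :=
  (continuousOn_f.mono fun _ hx => lt_of_lt_of_le (lt_min ha hb) hx.1).intervalIntegrable

theorem hasStrictDerivAt_G {n : ℕ} {r : ℝ} (hr : 0 < r) :
    HasStrictDerivAt (G n) (-f n r) r := by
  have hG : G n = fun x => -∫ t in (1 : ℝ)..x, f n t := by
    funext x; rw [G, intervalIntegral.integral_symm]
  rw [hG]
  exact (intervalIntegral.integral_hasStrictDerivAt_right (intervalIntegrable_f one_pos hr)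
    (continuousOn_f.stronglyMeasurableAtFilter isOpen_Ioi r hr) (continuousAt_f hr.ne')).neg

theorem contDiffOn_G {n : ℕ} : ContDiffOn ℝ 1 (G n) (Ioo 0 1) :=
  contDiffOn_one_of_hasDerivAt isOpen_Ioo (fun _ hx => (hasStrictDerivAt_G hx.1).hasDerivAt)
    (continuousOn_f.mono fun _ hx => hx.1).neg

theorem G_sub_G {n : ℕ} {a b : ℝ} (ha : 0 < a) (hb : 0 < b) :
    G n a - G n b = ∫ t in a..b, f n t := by
  rw [G, G, ← intervalIntegral.integral_add_adjacent_intervals (intervalIntegrable_f ha hb)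
    (intervalIntegrable_f hb one_pos)]
  ring

theorem integral_f_pos {n : ℕ} {a b : ℝ} (ha : 0 < a) (hab : a < b) (hb : b ≤ 1) :
    0 < ∫ t in a..b, f n t :=
  intervalIntegral.intervalIntegral_pos_of_pos_on (intervalIntegrable_f ha (ha.trans hab))
    (fun _ hx => f_pos ⟨ha.trans hx.1, hx.2.trans_le hb⟩) hab

theorem strictAntiOn_G {n : ℕ} : StrictAntiOn (G n) (Ioo 0 1) := fun a ha b hb hab => by
  have := G_sub_G (n := n) ha.1 hb.1
  linarith [integral_f_pos (n := n) ha.1 hab hb.2.le]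

theorem G_pos {n : ℕ} {r : ℝ} (hr : r ∈ Ioo (0 : ℝ) 1) : 0 < G n r :=
  integral_f_pos hr.1 hr.2 le_rfl

theorem G_one {n : ℕ} : G n 1 = 0 := intervalIntegral.integral_same

/-- From `f n t ≥ (3/4)^(n-2) / t` on `(0, 1/2]`. -/
theorem log_le_G {n : ℕ} (hn : 2 ≤ n) {r : ℝ} (hr : 0 < r) (hr2 : r ≤ 1 / 2) :
    (3 / 4 : ℝ) ^ (n - 2) * log (1 / 2 / r) ≤ G n r := by
  have hhalf : (0 : ℝ) < 1 / 2 := by norm_num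
  have hsplit := G_sub_G (n := n) hr hhalf
  have hG_half := G_pos (n := n) (r := 1 / 2) ⟨hhalf, by norm_num⟩
  have hbound : ∫ t in r..(1 / 2 : ℝ), (3 / 4 : ℝ) ^ (n - 2) * t⁻¹ ≤ ∫ t in r..(1 / 2 : ℝ), f n t
  · refine intervalIntegral.integral_mono_on hr2
      ((continuousOn_const.mul (continuousOn_inv₀.mono fun x hx =>
        (lt_of_lt_of_le (lt_min hr hhalf) hx.1).ne')).intervalIntegrable)
      (intervalIntegrable_f hr hhalf) fun x hx => ?_
    have hx0 : 0 < x := hr.trans_le hx.1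
    have hnum : (3 / 4 : ℝ) ^ (n - 2) ≤ (1 - x ^ 2) ^ (n - 2) :=
      pow_le_pow_left₀ (by norm_num) (by nlinarith [hx.2]) _
    have hden : x ^ (n - 1) ≤ x ^ 1 :=
      pow_le_pow_of_le_one hx0.le (by linarith [hx.2]) (by omega)
    calc (3 / 4 : ℝ) ^ (n - 2) * x⁻¹ = (3 / 4 : ℝ) ^ (n - 2) / x ^ 1 := by
          rw [pow_one, ← div_eq_mul_inv]
      _ ≤ f n x := div_le_div₀ (pow_nonneg (by nlinarith [hx.2]) _) hnum (pow_pos hx0 _) hden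
  rw [intervalIntegral.integral_const_mul, integral_inv_of_pos hr hhalf] at hbound
  linarith

theorem surjOn_G {n : ℕ} (hn : 2 ≤ n) : SurjOn (G n) (Ioo 0 1) (Ioi 0) := by
  intro y (hy : 0 < y)
  set r : ℝ := exp (-((4 / 3 : ℝ) ^ (n - 2) * y)) / 2
  have hr0 : 0 < r := by positivity
  have hr2 : r ≤ 1 / 2 := by
    have : exp (-((4 / 3 : ℝ) ^ (n - 2) * y)) ≤ 1 := exp_le_one_iff.2 (by
      have := pow_pos (show (0 : ℝ) < 4 / 3 by norm_num) (n - 2); nlinarith)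
    show exp (-((4 / 3 : ℝ) ^ (n - 2) * y)) / 2 ≤ 1 / 2
    linarith
  have hGr : y ≤ G n r := by
    have hlog : log (1 / 2 / r) = (4 / 3 : ℝ) ^ (n - 2) * y := by
      rw [show 1 / 2 / r = exp ((4 / 3 : ℝ) ^ (n - 2) * y) by
        simp only [r, exp_neg]; field_simp, log_exp]
    have := log_le_G hn hr0 hr2
    rwa [hlog, ← mul_assoc, ← mul_pow, show (3 / 4 : ℝ) * (4 / 3) = 1 by norm_num, one_pow,
      one_mul] at this
  have hcont : ContinuousOn (G n) (Icc r 1) := fun x hx =>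
    (hasStrictDerivAt_G (hr0.trans_le hx.1)).hasDerivAt.continuousAt.continuousWithinAt
  obtain ⟨c, hc, hGc⟩ := intermediate_value_Icc' (by linarith) hcont
    (show y ∈ Icc (G n 1) (G n r) from ⟨G_one.symm ▸ hy.le, hGr⟩)
  refine ⟨c, ⟨hr0.trans_le hc.1, hc.2.lt_of_ne ?_⟩, hGc⟩
  rintro rfl
  rw [G_one] at hGc
  linarith

theorem bijOn_G {n : ℕ} (hn : 2 ≤ n) : BijOn (G n) (Ioo 0 1) (Ioi 0) :=
  ⟨fun _ hr => G_pos hr, strictAntiOn_G.injOn, surjOn_G hn⟩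

/-- `|∇_{𝔹ⁿ} u|² dv_{g_{𝔹ⁿ}}` in polar coordinates is `u'(r)² · radialWeight n r · dr dσ`. -/
noncomputable def radialWeight (n : ℕ) (r : ℝ) : ℝ :=
  (1 - r ^ 2) ^ 2 / 4 * (2 / (1 - r ^ 2)) ^ n * r ^ (n - 1)

theorem radialWeight_eq_div_f {n : ℕ} (hn : 2 ≤ n) {r : ℝ} (hr : r ∈ Ioo (0 : ℝ) 1) :
    radialWeight n r = 2 ^ (n - 2) / f n r := by
  obtain ⟨m, rfl⟩ : ∃ m, n = m + 2 := ⟨n - 2, by omega⟩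
  have h1 : (1 : ℝ) - r ^ 2 ≠ 0 := by nlinarith [hr.1, hr.2]
  have h2 : r ≠ 0 := hr.1.ne'
  rw [radialWeight, f, show m + 2 - 2 = m by omega, show m + 2 - 1 = m + 1 by omega, div_pow]
  field_simp
  ring

/-- `λ f x / f y` is the derivative at `x` of `r ↦ G⁻¹ (λ G r)` when `y` is the image of `x`. -/
theorem radialWeight_transport {n : ℕ} (hn : 2 ≤ n) {lam : ℝ} (hlam : 0 < lam) {x y : ℝ}
    (hx : x ∈ Ioo (0 : ℝ) 1) (hy : y ∈ Ioo (0 : ℝ) 1) :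
    (lam ^ (-(1 : ℝ) / 2)) ^ 2 * (lam * f n x / f n y) * radialWeight n x = radialWeight n y := by
  have hsq : (lam ^ (-(1 : ℝ) / 2)) ^ 2 = lam⁻¹ := by
    rw [← rpow_natCast, ← rpow_mul hlam.le]
    norm_num [rpow_neg_one]
  rw [hsq, radialWeight_eq_div_f hn hx, radialWeight_eq_div_f hn hy]
  field_simp [(f_pos (n := n) hx).ne', (f_pos (n := n) hy).ne']

section Rescale

variable {n : ℕ} {lam : ℝ} {Ginv : ℝ → ℝ}

theorem mapsTo_Ginv (hn : 2 ≤ n) (hinv : InvOn Ginv (G n) (Ioo 0 1) (Ioi 0)) :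
    MapsTo Ginv (Ioi 0) (Ioo 0 1) :=
  hinv.1.mapsTo (surjOn_G hn)

theorem rescale_mem (hn : 2 ≤ n) (hlam : 0 < lam) (hinv : InvOn Ginv (G n) (Ioo 0 1) (Ioi 0))
    {r : ℝ} (hr : r ∈ Ioo (0 : ℝ) 1) : Ginv (lam * G n r) ∈ Ioo (0 : ℝ) 1 :=
  mapsTo_Ginv hn hinv (mul_pos hlam (G_pos hr))

theorem hasDerivAt_rescale (hn : 2 ≤ n) (hlam : 0 < lam)
    (hinv : InvOn Ginv (G n) (Ioo 0 1) (Ioi 0)) {r : ℝ} (hr : r ∈ Ioo (0 : ℝ) 1) :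
    HasDerivAt (fun t => Ginv (lam * G n t)) (lam * f n r / f n (Ginv (lam * G n r))) r := by
  set s := Ginv (lam * G n r)
  have hs : s ∈ Ioo (0 : ℝ) 1 := rescale_mem hn hlam hinv hr
  have hGinv : HasStrictDerivAt Ginv (-f n s)⁻¹ (G n s) :=
    (hasStrictDerivAt_G hs.1).to_local_left_inverse (neg_ne_zero.2 (f_pos hs).ne')
      (eventually_of_mem (isOpen_Ioo.mem_nhds hs) fun _ hx => hinv.1 hx)
  rw [show G n s = lam * G n r from hinv.2 (mul_pos hlam (G_pos hr))] at hGinv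
  refine (hGinv.hasDerivAt.comp r ((hasStrictDerivAt_G hr.1).hasDerivAt.const_mul lam)).congr_deriv
    ?_
  field_simp [(f_pos (n := n) hs).ne']

theorem contDiffOn_rescale (hn : 2 ≤ n) (hlam : 0 < lam)
    (hinv : InvOn Ginv (G n) (Ioo 0 1) (Ioi 0)) :
    ContDiffOn ℝ 1 (fun t => Ginv (lam * G n t)) (Ioo 0 1) := by
  have hcont : ContinuousOn (fun t => Ginv (lam * G n t)) (Ioo 0 1) := fun r hr =>
    (hasDerivAt_rescale hn hlam hinv hr).continuousAt.continuousWithinAt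
  refine contDiffOn_one_of_hasDerivAt isOpen_Ioo (fun r hr => hasDerivAt_rescale hn hlam hinv hr)
    ((continuousOn_const.mul (continuousOn_f.mono fun _ hx => hx.1)).div
      (continuousOn_f.comp hcont fun _ hr => (rescale_mem hn hlam hinv hr).1)
      fun _ hr => (f_pos (rescale_mem hn hlam hinv hr)).ne')

theorem injOn_rescale (hlam : 0 < lam) (hinv : InvOn Ginv (G n) (Ioo 0 1) (Ioi 0)) :
    InjOn (fun t => Ginv (lam * G n t)) (Ioo 0 1) := by
  intro a ha b hb hab
  have hG : G n (Ginv (lam * G n a)) = G n (Ginv (lam * G n b)) := congrArg (G n) hab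
  rw [hinv.2 (mul_pos hlam (G_pos ha)), hinv.2 (mul_pos hlam (G_pos hb))] at hG
  exact strictAntiOn_G.injOn ha hb (mul_left_cancel₀ hlam.ne' hG)

theorem image_rescale (hn : 2 ≤ n) (hlam : 0 < lam) (hinv : InvOn Ginv (G n) (Ioo 0 1) (Ioi 0)) :
    (fun t => Ginv (lam * G n t)) '' Ioo 0 1 = Ioo 0 1 := by
  refine (MapsTo.image_subset fun r hr => rescale_mem hn hlam hinv hr).antisymm fun s hs => ?_
  have hy : lam⁻¹ * G n s ∈ Ioi (0 : ℝ) := mul_pos (inv_pos.2 hlam) (G_pos hs)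
  refine ⟨Ginv (lam⁻¹ * G n s), mapsTo_Ginv hn hinv hy, ?_⟩
  show Ginv (lam * G n (Ginv (lam⁻¹ * G n s))) = s
  rw [hinv.2 hy, mul_inv_cancel_left₀ hlam.ne', hinv.1 hs]

end Rescale

/-- `G` is a strictly decreasing `C¹` bijection from `(0,1)` onto `(0,∞)` with
nonvanishing derivative; for any inverse `G⁻¹`, any `λ > 0` and any `u ∈ C¹((0,1))`, the
rescaling `u_λ(r) = λ^{-1/2} u(G⁻¹(λ G(r)))` is again `C¹` on `(0,1)` and satisfies the
invariance of the hyperbolic Dirichlet energy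
`∫₀¹ ((1-r²)²/4)|u_λ'|² (2/(1-r²))ⁿ r^{n-1} dr = ∫₀¹ ((1-r²)²/4)|u'|² (2/(1-r²))ⁿ r^{n-1} dr`. -/
theorem stmt_5 (n : ℕ) (hn : 3 ≤ n) (lam : ℝ) (hlam : 0 < lam) :
    ContDiffOn ℝ 1 (G n) (Set.Ioo 0 1) ∧ StrictAntiOn (G n) (Set.Ioo 0 1) ∧
    Set.BijOn (G n) (Set.Ioo 0 1) (Set.Ioi 0) ∧
    (∀ r ∈ Set.Ioo (0 : ℝ) 1, deriv (G n) r ≠ 0) ∧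
    ∀ Ginv : ℝ → ℝ, Set.InvOn Ginv (G n) (Set.Ioo 0 1) (Set.Ioi 0) →
      ∀ u : ℝ → ℝ, ContDiffOn ℝ 1 u (Set.Ioo 0 1) →
        ContDiffOn ℝ 1 (fun r => lam ^ (-(1 : ℝ) / 2) * u (Ginv (lam * G n r)))
          (Set.Ioo 0 1) ∧
        ∫⁻ r in Set.Ioo (0 : ℝ) 1,
            ENNReal.ofReal ((1 - r ^ 2) ^ 2 / 4 *
              |deriv (fun t => lam ^ (-(1 : ℝ) / 2) * u (Ginv (lam * G n t))) r| ^ 2 *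
              (2 / (1 - r ^ 2)) ^ n * r ^ (n - 1)) =
        ∫⁻ r in Set.Ioo (0 : ℝ) 1,
            ENNReal.ofReal ((1 - r ^ 2) ^ 2 / 4 * |deriv u r| ^ 2 *
              (2 / (1 - r ^ 2)) ^ n * r ^ (n - 1)) := by
  have hn2 : 2 ≤ n := by omega
  refine ⟨contDiffOn_G, strictAntiOn_G, bijOn_G hn2, fun r hr => ?_,
    fun Ginv hinv u hu => ⟨?_, ?_⟩⟩
  · rw [(hasStrictDerivAt_G hr.1).hasDerivAt.deriv]
    exact neg_ne_zero.2 (f_pos hr).ne'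
  · exact contDiffOn_const.mul
      (hu.comp (contDiffOn_rescale hn2 hlam hinv) fun _ hr => rescale_mem hn2 hlam hinv hr)
  have hdensity : ∀ v r : ℝ, (1 - r ^ 2) ^ 2 / 4 * |v| ^ 2 * (2 / (1 - r ^ 2)) ^ n * r ^ (n - 1)
      = |v| ^ 2 * radialWeight n r := fun v r => by rw [radialWeight]; ring
  simp only [hdensity]
  rw [lintegral_sq_deriv_const_mul_comp measurableSet_Ioo
    (fun r hr => hasDerivAt_rescale hn2 hlam hinv hr) (injOn_rescale hlam hinv)
    (fun r hr => (div_pos (mul_pos hlam (f_pos hr)) (f_pos (rescale_mem hn2 hlam hinv hr))).le)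
    (fun r hr => (hu.differentiableOn one_ne_zero).differentiableAt
      (isOpen_Ioo.mem_nhds (rescale_mem hn2 hlam hinv hr)))
    (fun r hr => radialWeight_transport hn2 hlam hr (rescale_mem hn2 hlam hinv hr)),
    image_rescale hn2 hlam hinv]
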